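/- Let (P, W, c) be a witness Gabriel drawing of a complete k-partite graph with k ≥ 3, with P ∪ W in general position and with every color class of c containing at least two points. Then for every color i ∈ Fin k there are at least two points p ∈ P with c(p) = i that lie on the convex hull of P, i.e., p ∉ convexHull(P \ {p}). -/

import Mathlib

open scoped RealInnerProductSpace

noncomputable section

/-- The Euclidean plane. -/
abbrev Pt := EuclideanSpace ℝ (Fin 2)

/-- The closed disk with diameter `ab`. -/
def diskD (a b : Pt) : Set Pt := Metric.closedBall (midpoint ℝ a b) (dist a b / 2)

/-- `a` and `b` are adjacent in the witness Gabriel graph with witness set `W`. -/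
def gabrielEdge (W : Set Pt) (a b : Pt) : Prop := (diskD a b \ {a, b}) ∩ W = ∅

/-- General position: no three points collinear, no four points concyclic. -/
def GenPos (S : Set Pt) : Prop :=
  (∀ a ∈ S, ∀ b ∈ S, ∀ c ∈ S, a ≠ b → a ≠ c → b ≠ c → ¬ Collinear ℝ ({a, b, c} : Set Pt)) ∧
  (∀ a ∈ S, ∀ b ∈ S, ∀ c ∈ S, ∀ d ∈ S, a ≠ b → a ≠ c → a ≠ d → b ≠ c → b ≠ d → c ≠ d →
    ¬ EuclideanGeometry.Cospherical ({a, b, c, d} : Set Pt))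

/-- Planar determinant `u₁v₂ − u₂v₁`. -/
def det2 (u v : Pt) : ℝ := u 0 * v 1 - u 1 * v 0

/-- Counterclockwise convex position. -/
def CCWConvexPos {m : ℕ} (q : Fin m → Pt) : Prop :=
  ∀ i j k : Fin m, i < j → j < k → 0 < det2 (q j - q i) (q k - q i)

/-- Cyclic successor in `Fin m`. -/
def cyclicSucc {m : ℕ} (hm : 0 < m) (i : Fin m) : Fin m :=
  ⟨((i : ℕ) + 1) % m, Nat.mod_lt _ hm⟩

/-! Let `s ≠ v` be vertices of the same colour. They are not adjacent, so some witness `w ≠ s, v`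
lies in the disk with diameter `sv`, i.e. `⟪v - w, s - w⟫ ≤ 0`. A vertex `x ≠ w` of another
colour is adjacent to `v`, so `w` lies outside the disk with diameter `xv`, i.e.
`⟪v - w, x - w⟫ > 0`; trivially the same holds for `x = v`. If `v` were the only hull vertex of
its colour, then all hull vertices would lie in the convex set `{w} ∪ {y | ⟪v - w, y - w⟫ > 0}`,
hence so would their convex hull, which contains `s`; this forces `s = w`. Thus every colour class
has a hull vertex other than any given vertex `v` of that class, and applying this twice gives two
hull vertices. -/

section Convex

variable {E : Type*} [AddCommGroup E] [Module ℝ E]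

theorem convex_insert_setOf_lt (f : E →ₗ[ℝ] ℝ) (w : E) :
    Convex ℝ (insert w {y | f w < f y}) := by
  rw [convex_iff_forall_pos]
  rintro x hx y hy a b ha hb hab
  obtain rfl : a = 1 - b := eq_sub_of_add_eq hab
  rcases hx with rfl | hx <;> rcases hy with rfl | hy
  · left
    rw [← add_smul, hab, one_smul]
  all_goals
    right
    simp only [Set.mem_ofPred_eq, map_add, map_smul, smul_eq_mul] at *
  · linarith [mul_pos hb (sub_pos.2 hy)]
  · linarith [mul_pos ha (sub_pos.2 hx)]
  · linarith [mul_pos ha (sub_pos.2 hx), mul_pos hb (sub_pos.2 hy)]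

theorem eq_of_mem_convexHull_of_le (f : E →ₗ[ℝ] ℝ) {A : Set E} {s w : E}
    (hA : ∀ a ∈ A, a ≠ w → f w < f a) (hs : s ∈ convexHull ℝ A) (hsw : f s ≤ f w) : s = w := by
  have hsub : A ⊆ insert w {y | f w < f y} := fun a ha =>
    (eq_or_ne a w).imp id (hA a ha)
  exact (convexHull_min hsub (convex_insert_setOf_lt f w) hs).resolve_right hsw.not_gt

def hullVertices (P : Set E) : Set E := {p ∈ P | p ∉ convexHull ℝ (P \ {p})}

theorem Set.Finite.convexHull_hullVertices [TopologicalSpace E] [T2Space E]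
    [IsTopologicalAddGroup E] [ContinuousSMul ℝ E] [LocallyConvexSpace ℝ E] {P : Set E}
    (hP : P.Finite) : convexHull ℝ (hullVertices P) = convexHull ℝ P := by
  refine (convexHull_mono (Set.sep_subset _ _)).antisymm ?_
  set K := convexHull ℝ P
  have hext : K.extremePoints ℝ ⊆ hullVertices P := fun e he =>
    ⟨extremePoints_convexHull_subset he, fun hmem =>
      ((convex_convexHull ℝ P).mem_extremePoints_iff_mem_sdiff_convexHull_sdiff.1 he).2
        (convexHull_mono (Set.sdiff_subset_sdiff_left (subset_convexHull ℝ P)) hmem)⟩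
  calc K = closure (convexHull ℝ (K.extremePoints ℝ)) :=
        (closure_convexHull_extremePoints (hP.isCompact_convexHull ℝ) (convex_convexHull ℝ P)).symm
    _ = convexHull ℝ (K.extremePoints ℝ) :=
        ((hP.subset extremePoints_convexHull_subset).isClosed_convexHull ℝ).closure_eq
    _ ⊆ convexHull ℝ (hullVertices P) := convexHull_mono hext

end Convex

theorem mem_diskD_iff {a b x : Pt} : x ∈ diskD a b ↔ ⟪a - x, b - x⟫ ≤ 0 := by
  have hmid : x - midpoint ℝ a b = (-(2⁻¹ : ℝ)) • ((a - x) + (b - x)) := by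
    rw [midpoint_eq_smul_add, invOf_eq_inv]
    module
  have hab : a - b = (a - x) - (b - x) := by abel
  rw [diskD, Metric.mem_closedBall, dist_eq_norm, dist_eq_norm, hmid, hab, norm_smul,
    ← sq_le_sq₀ (by positivity) (by positivity), mul_pow, div_pow]
  rw [norm_add_sq_real (a - x), norm_sub_sq_real (a - x)]
  norm_num
  constructor <;> intro <;> linarith

theorem exists_witness_of_not_gabrielEdge {W : Set Pt} {a b : Pt} (h : ¬ gabrielEdge W a b) :
    ∃ w ∈ W, w ≠ a ∧ w ≠ b ∧ ⟪a - w, b - w⟫ ≤ 0 := by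
  obtain ⟨w, ⟨hwD, hwab⟩, hwW⟩ := Set.nonempty_iff_ne_empty.2 h
  simp only [Set.mem_insert_iff, Set.mem_singleton_iff, not_or] at hwab
  exact ⟨w, hwW, hwab.1, hwab.2, mem_diskD_iff.1 hwD⟩

theorem inner_pos_of_gabrielEdge {W : Set Pt} {a b w : Pt} (h : gabrielEdge W a b) (hw : w ∈ W)
    (hwa : w ≠ a) (hwb : w ≠ b) : 0 < ⟪a - w, b - w⟫ := by
  rw [← not_le, ← mem_diskD_iff]
  intro hwD
  exact (Set.eq_empty_iff_forall_notMem.1 h) w ⟨⟨hwD, by simp [hwa, hwb]⟩, hw⟩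

theorem exists_mem_hullVertices_ne_of_color_eq {ι : Type*} {P W : Finset Pt} {c : Pt → ι}
    (hdraw : ∀ a ∈ P, ∀ b ∈ P, a ≠ b → (gabrielEdge (W : Set Pt) a b ↔ c a ≠ c b))
    {s v : Pt} (hs : s ∈ P) (hv : v ∈ P) (hsv : s ≠ v) (hc : c s = c v) :
    ∃ e ∈ hullVertices (P : Set Pt), c e = c v ∧ e ≠ v := by
  by_contra! honly
  obtain ⟨w, hwW, hws, hwv, hw⟩ :=
    exists_witness_of_not_gabrielEdge (by rw [hdraw s hs v hv hsv]; exact not_not.2 hc)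
  let f := innerₛₗ ℝ (v - w)
  have hA : ∀ a ∈ hullVertices (P : Set Pt), a ≠ w → f w < f a := by
    intro a ha haw
    rw [← sub_pos, innerₛₗ_apply_apply, innerₛₗ_apply_apply, ← inner_sub_right]
    by_cases hca : c a = c v
    · rw [honly a ha hca]
      exact real_inner_self_pos.2 (sub_ne_zero.2 hwv.symm)
    · rw [real_inner_comm]
      exact inner_pos_of_gabrielEdge ((hdraw a ha.1 v hv (ne_of_apply_ne c hca)).2 hca) hwW
        haw.symm hwv
  have hsw : f s ≤ f w := by
    rw [← sub_nonpos, innerₛₗ_apply_apply, innerₛₗ_apply_apply, ← inner_sub_right,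
      real_inner_comm]
    exact hw
  have hsK : s ∈ convexHull ℝ (hullVertices (P : Set Pt)) := by
    rw [P.finite_toSet.convexHull_hullVertices]
    exact subset_convexHull ℝ _ hs
  exact hws (eq_of_mem_convexHull_of_le f hA hsK hsw).symm

theorem two_vertices_of_each_color_on_hull_general
    {k : ℕ} (P W : Finset Pt) (c : Pt → Fin k)
    (hsize : ∀ i : Fin k, 2 ≤ (P.filter (fun p => c p = i)).card)
    (hdraw : ∀ a ∈ P, ∀ b ∈ P, a ≠ b →
      (gabrielEdge (W : Set Pt) a b ↔ c a ≠ c b)) :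
    ∀ i : Fin k, ∃ p ∈ P, ∃ q ∈ P, p ≠ q ∧ c p = i ∧ c q = i ∧
      p ∉ convexHull ℝ ((P : Set Pt) \ {p}) ∧
      q ∉ convexHull ℝ ((P : Set Pt) \ {q}) := by
  intro i
  obtain ⟨s, hs, v, hv, hsv⟩ := Finset.one_lt_card.1 (hsize i)
  rw [Finset.mem_filter] at hs hv
  obtain ⟨p, hp, hpc, hpv⟩ :=
    exists_mem_hullVertices_ne_of_color_eq hdraw hs.1 hv.1 hsv (hs.2.trans hv.2.symm)
  obtain ⟨q, hq, hqc, hqp⟩ :=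
    exists_mem_hullVertices_ne_of_color_eq hdraw hv.1 hp.1 hpv.symm hpc.symm
  exact ⟨p, hp.1, q, hq.1, hqp.symm, hpc.trans hv.2, hqc.trans (hpc.trans hv.2), hp.2, hq.2⟩

/-- In a witness Gabriel drawing of a complete `k`-partite graph (`k ≥ 3`,
at least two points of each color), at least two vertices of each color lie on the convex
hull of the vertex set. -/
theorem two_vertices_of_each_color_on_hull
    {k : ℕ} (hk : 3 ≤ k) (P W : Finset Pt) (c : Pt → Fin k)
    (hgp : GenPos ((P : Set Pt) ∪ (W : Set Pt)))
    (hsize : ∀ i : Fin k, 2 ≤ (P.filter (fun p => c p = i)).card)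
    (hdraw : ∀ a ∈ P, ∀ b ∈ P, a ≠ b →
      (gabrielEdge (W : Set Pt) a b ↔ c a ≠ c b)) :
    ∀ i : Fin k, ∃ p ∈ P, ∃ q ∈ P, p ≠ q ∧ c p = i ∧ c q = i ∧
      p ∉ convexHull ℝ ((P : Set Pt) \ {p}) ∧
      q ∉ convexHull ℝ ((P : Set Pt) \ {q}) :=
  two_vertices_of_each_color_on_hull_general P W c hsize hdraw
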